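/- Let R be an algebra over a field F of characteristic 0, let σ be an automorphism of R, and let D be a q-skew σ-derivation on R. Let I = {r ∈ R : r·x ∈ J(R[x;σ,D])}. Then I is (σ,D)-stable: σ(I) = I (σ-invariant, i.e., both σ(I) ⊆ I and σ⁻¹(I) ⊆ I) and D(I) ⊆ I. -/

import Mathlib

/-!
Because `D` is `q`-skew, `σ` extends to a surjective ring endomorphism of `R[x;σ,D]` sending
`x ↦ q⁻¹ x`, and `σ⁻¹` to one sending `x ↦ σ⁻¹(q) x`. Surjective endomorphisms preserve the
Jacobson radical, so they carry `r x ∈ J` to `σ(r) x ∈ J` and to `σ⁻¹(r) x ∈ J`, up to a central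
unit. Finally `D(r) x = x (r x) - (σ(r) x) x` lies in the two-sided ideal `J`.
-/

/-- `S` is (a copy of) the Ore extension `R[x;σ,D]` of `R`: `ι : R → S` is the inclusion of
coefficients, `X ∈ S` is the variable, every element of `S` is uniquely a polynomial
`Σᵢ ι(aᵢ) * Xⁱ`, and multiplication is governed by `X * a = σ(a) * X + D(a)`. -/
structure IsOreExtension {R S : Type*} [Ring R] [Ring S]
    (σ : R → R) (D : R → R) (ι : R → S) (X : S) : Prop where
  σ_add : ∀ a b : R, σ (a + b) = σ a + σ b
  σ_mul : ∀ a b : R, σ (a * b) = σ a * σ b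
  σ_one : σ 1 = 1
  D_add : ∀ a b : R, D (a + b) = D a + D b
  D_mul : ∀ a b : R, D (a * b) = σ a * D b + D a * b
  ι_add : ∀ a b : R, ι (a + b) = ι a + ι b
  ι_mul : ∀ a b : R, ι (a * b) = ι a * ι b
  ι_one : ι 1 = 1
  X_comm : ∀ a : R, X * ι a = ι (σ a) * X + ι (D a)
  repr : ∀ s : S, ∃ c : ℕ →₀ R, s = c.sum fun i a => ι a * X ^ i
  uniq : ∀ c : ℕ →₀ R, (c.sum fun i a => ι a * X ^ i) = 0 → c = 0

open Function

theorem Ideal.map_mem_jacobson_bot {S T : Type*} [Ring S] [Ring T] {f : S →+* T}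
    (hf : Surjective f) {x : S} (hx : x ∈ (⊥ : Ideal S).jacobson) :
    f x ∈ (⊥ : Ideal T).jacobson := by
  have : RingHomSurjective f := ⟨hf⟩
  rw [Ideal.jacobson_bot] at hx ⊢
  exact Ring.le_comap_jacobson f hx

theorem Finsupp.sum_mul_pow_mul_self {R U : Type*} [AddCommMonoid R] [Semiring U] (c : ℕ →₀ R)
    (g : R → U) (x : U) :
    (c.sum fun i a => g a * x ^ i) * x = (c.mapDomain (· + 1)).sum fun i a => g a * x ^ i := by
  rw [Finsupp.sum_mapDomain_index_inj (add_left_injective 1)]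
  simp only [Finsupp.sum, Finset.sum_mul, pow_succ, mul_assoc]

namespace IsOreExtension

variable {R S : Type*} [Ring R] [Ring S] {σ D : R → R} {ι : R → S} {X : S}
  (h : IsOreExtension σ D ι X)
include h

def σRingHom : R →+* R where
  toFun := σ
  map_one' := h.σ_one
  map_mul' := h.σ_mul
  map_zero' := (AddMonoidHom.mk' σ h.σ_add).map_zero
  map_add' := h.σ_add

def ιRingHom : R →+* S where
  toFun := ι
  map_one' := h.ι_one
  map_mul' := h.ι_mul
  map_zero' := (AddMonoidHom.mk' ι h.ι_add).map_zero
  map_add' := h.ι_add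

@[simp]
theorem σRingHom_apply (a : R) : h.σRingHom a = σ a := rfl

@[simp]
theorem ιRingHom_apply (a : R) : h.ιRingHom a = ι a := rfl

theorem ι_zero : ι 0 = 0 := h.ιRingHom.map_zero

theorem ι_sub (a b : R) : ι (a - b) = ι a - ι b := map_sub h.ιRingHom a b

theorem sum_injective {c d : ℕ →₀ R}
    (hcd : (c.sum fun i a => ι a * X ^ i) = d.sum fun i a => ι a * X ^ i) : c = d := by
  have hsub : (c - d).sum (fun i a => ι a * X ^ i) = 0 := by
    rw [Finsupp.sum_sub_index fun _ _ _ => by rw [h.ι_sub, sub_mul], hcd, sub_self]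
  exact sub_eq_zero.mp (h.uniq _ hsub)

theorem induction_on {P : S → Prop} (s : S) (ι_mem : ∀ a, P (ι a))
    (mul_X : ∀ s, P s → P (s * X)) (add : ∀ s t, P s → P t → P (s + t)) : P s := by
  obtain ⟨c, rfl⟩ := h.repr s
  have monomial : ∀ i a, P (ι a * X ^ i) := by
    intro i a
    induction i with
    | zero => simpa using ι_mem a
    | succ i ih => rw [pow_succ, ← mul_assoc]; exact mul_X _ ih
  exact Finset.sum_induction _ P add (h.ι_zero ▸ ι_mem 0) fun i _ => monomial i (c i)

theorem surjective_of_mem_range {T : Type*} [Ring T] (f : T →+* S) (hι : ∀ a, ι a ∈ f.range)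
    (hX : X ∈ f.range) : Surjective f := fun s =>
  RingHom.mem_range.mp <| h.induction_on s hι (fun _ hs => mul_mem hs hX) fun _ _ => add_mem

section lift

variable {T : Type*} [Ring T] (ψ : R →+* T) (Y : T)

noncomputable def liftFun (s : S) : T :=
  (h.repr s).choose.sum fun i a => ψ a * Y ^ i

theorem liftFun_sum (c : ℕ →₀ R) :
    h.liftFun ψ Y (c.sum fun i a => ι a * X ^ i) = c.sum fun i a => ψ a * Y ^ i := by
  rw [liftFun, h.sum_injective (h.repr _).choose_spec.symm]

theorem liftFun_add (s t : S) : h.liftFun ψ Y (s + t) = h.liftFun ψ Y s + h.liftFun ψ Y t := by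
  obtain ⟨c, rfl⟩ := h.repr s
  obtain ⟨d, rfl⟩ := h.repr t
  rw [← Finsupp.sum_add_index' (fun _ => by rw [h.ι_zero, zero_mul])
    fun _ _ _ => by rw [h.ι_add, add_mul], h.liftFun_sum, h.liftFun_sum, h.liftFun_sum,
    Finsupp.sum_add_index' (fun _ => by rw [map_zero, zero_mul])
    fun _ _ _ => by rw [map_add, add_mul]]

theorem liftFun_ι_mul_X_pow (a : R) (i : ℕ) : h.liftFun ψ Y (ι a * X ^ i) = ψ a * Y ^ i := by
  have := h.liftFun_sum ψ Y (Finsupp.single i a)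
  rwa [Finsupp.sum_single_index (by rw [h.ι_zero, zero_mul]),
    Finsupp.sum_single_index (by rw [map_zero, zero_mul])] at this

theorem liftFun_ι (a : R) : h.liftFun ψ Y (ι a) = ψ a := by
  simpa using h.liftFun_ι_mul_X_pow ψ Y a 0

theorem liftFun_X : h.liftFun ψ Y X = Y := by
  simpa [h.ι_one] using h.liftFun_ι_mul_X_pow ψ Y 1 1

theorem liftFun_mul_X (s : S) : h.liftFun ψ Y (s * X) = h.liftFun ψ Y s * Y := by
  obtain ⟨c, rfl⟩ := h.repr s
  rw [Finsupp.sum_mul_pow_mul_self, h.liftFun_sum, h.liftFun_sum, Finsupp.sum_mul_pow_mul_self]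

variable {ψ Y} (hY : ∀ a, Y * ψ a = ψ (σ a) * Y + ψ (D a))
include hY

theorem liftFun_mul_ι (s : S) (a : R) :
    h.liftFun ψ Y (s * ι a) = h.liftFun ψ Y s * ψ a := by
  induction s using h.induction_on generalizing a with
  | ι_mem b => rw [← h.ι_mul, h.liftFun_ι, h.liftFun_ι, map_mul]
  | mul_X s ih =>
    rw [mul_assoc, h.X_comm, mul_add, ← mul_assoc, h.liftFun_add, h.liftFun_mul_X, ih, ih,
      h.liftFun_mul_X, mul_assoc _ Y, hY, mul_add, mul_assoc]
  | add s t ihs iht => rw [add_mul, h.liftFun_add, h.liftFun_add, ihs, iht, add_mul]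

theorem liftFun_mul (s t : S) :
    h.liftFun ψ Y (s * t) = h.liftFun ψ Y s * h.liftFun ψ Y t := by
  induction t using h.induction_on with
  | ι_mem a => rw [h.liftFun_mul_ι hY, h.liftFun_ι]
  | mul_X t ih => rw [← mul_assoc, h.liftFun_mul_X, ih, h.liftFun_mul_X, mul_assoc]
  | add t u iht ihu => rw [mul_add, h.liftFun_add, h.liftFun_add, iht, ihu, mul_add]

noncomputable def lift : S →+* T where
  toFun := h.liftFun ψ Y
  map_one' := by rw [← h.ι_one, h.liftFun_ι, map_one]
  map_mul' := h.liftFun_mul hY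
  map_zero' := by rw [← h.ι_zero, h.liftFun_ι, map_zero]
  map_add' := h.liftFun_add ψ Y

@[simp]
theorem lift_ι (a : R) : h.lift hY (ι a) = ψ a := h.liftFun_ι ψ Y a

@[simp]
theorem lift_X : h.lift hY X = Y := h.liftFun_X ψ Y

end lift

theorem ι_D_mul_X (r : R) : ι (D r) * X = X * (ι r * X) - ι (σ r) * X * X := by
  rw [← mul_assoc, h.X_comm, add_mul, add_sub_cancel_left]

section twist

variable {φ : R →+* R} (hφ : Surjective φ) (hφσ : ∀ a, φ (σ a) = σ (φ a)) {z : Rˣ}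
  (hz : ∀ a, (z : R) * a = a * z) (hzD : ∀ a, z * D (φ a) = φ (D a))
include hφ hφσ hz hzD

theorem exists_surjective_twist :
    ∃ f : S →+* S, Surjective f ∧ (∀ a, f (ι a) = ι (φ a)) ∧ f X = ι z * X := by
  have hY : ∀ a, ι z * X * h.ιRingHom.comp φ a =
      h.ιRingHom.comp φ (σ a) * (ι z * X) + h.ιRingHom.comp φ (D a) := by
    intro a
    simp only [RingHom.comp_apply, ιRingHom_apply]
    rw [mul_assoc, h.X_comm, mul_add, ← mul_assoc, ← h.ι_mul, ← h.ι_mul, hz, hφσ, hzD, h.ι_mul,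
      mul_assoc]
  have hι : ∀ b, ι b ∈ (h.lift hY).range := fun b => by
    obtain ⟨a, rfl⟩ := hφ b
    exact ⟨ι a, h.lift_ι hY a⟩
  have hX : X ∈ (h.lift hY).range := by
    have hzX : ι z * X ∈ (h.lift hY).range := ⟨X, h.lift_X hY⟩
    simpa [← mul_assoc, ← h.ι_mul, h.ι_one] using mul_mem (hι ↑z⁻¹) hzX
  exact ⟨h.lift hY, h.surjective_of_mem_range _ hι hX, h.lift_ι hY, h.lift_X hY⟩

theorem map_mul_X_mem_jacobson {r : R} (hr : ι r * X ∈ (⊥ : Ideal S).jacobson) :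
    ι (φ r) * X ∈ (⊥ : Ideal S).jacobson := by
  obtain ⟨f, hf, hfι, hfX⟩ := h.exists_surjective_twist hφ hφσ hz hzD
  have hfr := Ideal.map_mem_jacobson_bot hf hr
  rw [map_mul, hfι, hfX] at hfr
  have key : ι (φ r) * X = ι ↑z⁻¹ * (ι (φ r) * (ι z * X)) := calc
    ι (φ r) * X = ι (↑z⁻¹ * (φ r * z)) * X := by rw [← hz, ← mul_assoc, Units.inv_mul, one_mul]
    _ = ι ↑z⁻¹ * (ι (φ r) * (ι z * X)) := by rw [h.ι_mul, h.ι_mul, mul_assoc, mul_assoc]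
  rw [key]
  exact Ideal.mul_mem_left _ _ hfr

end twist

theorem ι_D_mul_X_mem_jacobson {r : R} (hr : ι r * X ∈ (⊥ : Ideal S).jacobson)
    (hσr : ι (σ r) * X ∈ (⊥ : Ideal S).jacobson) : ι (D r) * X ∈ (⊥ : Ideal S).jacobson := by
  rw [h.ι_D_mul_X]
  exact sub_mem (Ideal.mul_mem_left _ X hr) (Ideal.mul_mem_right X _ hσr)

theorem mul_X_mem_jacobson_iff_σ {F : Type*} [Field F] [Algebra F R] (hσ : Bijective σ) {q : F}
    (hq : q ≠ 0) (hskew : ∀ a, D (σ a) = q • σ (D a)) (r : R) :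
    ι r * X ∈ (⊥ : Ideal S).jacobson ↔ ι (σ r) * X ∈ (⊥ : Ideal S).jacobson := by
  let σ' : R ≃+* R := RingEquiv.ofBijective h.σRingHom hσ
  have hσ' : ∀ a, σ' a = σ a := fun _ => rfl
  have hskew' : ∀ a, D (σ a) = algebraMap F R q * σ (D a) := fun a => by
    rw [hskew, Algebra.smul_def]
  constructor
  · -- `σ` extends to the endomorphism `ι a ↦ ι (σ a)`, `X ↦ q⁻¹ X`
    exact h.map_mul_X_mem_jacobson (φ := h.σRingHom) hσ.2 (fun _ => rfl)
      (z := (Units.mk0 q⁻¹ (inv_ne_zero hq)).map (algebraMap F R)) (fun a => Algebra.commutes _ a)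
      (fun a => by simp [hskew', ← mul_assoc, ← map_mul, hq])
  · -- `σ⁻¹` extends to the endomorphism `ι a ↦ ι (σ⁻¹ a)`, `X ↦ σ⁻¹(q) X`
    intro hr
    have := h.map_mul_X_mem_jacobson (φ := σ'.symm) σ'.symm.surjective ?_
      (z := ((Units.mk0 q hq).map (algebraMap F R)).map σ'.symm.toMonoidHom) ?_ ?_ hr
    · rwa [RingEquiv.coe_toRingHom, ← hσ', σ'.symm_apply_apply] at this
    · intro a
      rw [RingEquiv.coe_toRingHom, ← hσ', ← hσ', σ'.apply_symm_apply, σ'.symm_apply_apply]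
    · intro a
      apply σ'.injective
      simp [Algebra.commutes]
    · intro a
      apply σ'.injective
      simp only [RingHom.toMonoidHom_eq_coe, RingEquiv.toRingHom_eq_coe, Units.coe_map,
        Units.val_mk0, MonoidHom.coe_coe, RingHom.coe_coe, map_mul, RingEquiv.apply_symm_apply]
      rw [hσ', ← hskew', ← hσ', σ'.apply_symm_apply]

end IsOreExtension

theorem I_sigma_D_stable_general {F R S : Type*} [Field F]
    [Ring R] [Algebra F R] [Ring S]
    (σ D : R → R) (ι : R → S) (X : S)
    (hOre : IsOreExtension σ D ι X) (hσ : Function.Bijective σ)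
    (q : F) (hq : q ≠ 0) (hskew : ∀ a : R, D (σ a) = q • σ (D a)) :
    (∀ r : R, ι r * X ∈ (⊥ : Ideal S).jacobson ↔ ι (σ r) * X ∈ (⊥ : Ideal S).jacobson) ∧
      ∀ r : R, ι r * X ∈ (⊥ : Ideal S).jacobson → ι (D r) * X ∈ (⊥ : Ideal S).jacobson := by
  have stable := hOre.mul_X_mem_jacobson_iff_σ hσ hq hskew
  exact ⟨stable, fun r hr => hOre.ι_D_mul_X_mem_jacobson hr ((stable r).mp hr)⟩

/-- If `R` is an algebra over a field of characteristic `0`, `σ` is an automorphism and `D` a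
`q`-skew `σ`-derivation, then `I = {r ∈ R : r·x ∈ J(R[x;σ,D])}` is `(σ,D)`-stable:
`σ(I) = I` (equivalently `σ(I) ⊆ I` and `σ⁻¹(I) ⊆ I`) and `D(I) ⊆ I`. -/
theorem I_sigma_D_stable {F R S : Type*} [Field F] [CharZero F]
    [Ring R] [Algebra F R] [Ring S]
    (σ D : R → R) (ι : R → S) (X : S)
    (hOre : IsOreExtension σ D ι X) (hσ : Function.Bijective σ)
    (q : F) (hq : q ≠ 0) (hskew : ∀ a : R, D (σ a) = q • σ (D a)) :
    (∀ r : R, ι r * X ∈ (⊥ : Ideal S).jacobson ↔ ι (σ r) * X ∈ (⊥ : Ideal S).jacobson) ∧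
      ∀ r : R, ι r * X ∈ (⊥ : Ideal S).jacobson → ι (D r) * X ∈ (⊥ : Ideal S).jacobson :=
  I_sigma_D_stable_general σ D ι X hOre hσ q hq hskew
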